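/- In the category Pos, every surjective monotone map f : A → B is a subregular epimorphism: it is the coinserter of the two projections π₀, π₁ : B_f → A, where B_f is the subposet of A × A consisting of pairs (a₀, a₁) with f(a₀) ≤ f(a₁). -/
import Mathlib


/-- A coinserter in `Pos`: `e : B → C` is universal with respect to `e ∘ u₀ ≤ e ∘ u₁`. -/
structure IsPosCoinserter {A B C : Type} [PartialOrder A] [PartialOrder B] [PartialOrder C]
    (u₀ u₁ : A →o B) (e : B →o C) : Prop where
  le : ∀ a, e (u₀ a) ≤ e (u₁ a)
  factor : ∀ {D : Type} [PartialOrder D] (f : B →o D), (∀ a, f (u₀ a) ≤ f (u₁ a)) →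
    ∃ g : C →o D, g.comp e = f
  reflects : ∀ {D : Type} [PartialOrder D] (g g' : C →o D), (∀ b, g (e b) ≤ g' (e b)) → g ≤ g'

/-- Every surjective monotone map `f : A → B` in `Pos` is a subregular epimorphism:
it is the coinserter of the two projections `π₀ π₁ : B_f → A`, where `B_f` is the
subposet of `A × A` consisting of the pairs `(a₀, a₁)` with `f a₀ ≤ f a₁`. -/
theorem stmt1 {A B : Type} [PartialOrder A] [PartialOrder B] (f : A →o B)
    (hf : Function.Surjective f) :
    IsPosCoinserter (A := {p : A × A // f p.1 ≤ f p.2})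
      ⟨fun p => p.val.1, fun _ _ h => (Prod.le_def.mp (Subtype.coe_le_coe.mpr h)).1⟩
      ⟨fun p => p.val.2, fun _ _ h => (Prod.le_def.mp (Subtype.coe_le_coe.mpr h)).2⟩ f := by
  constructor
  · exact fun a => a.prop
  · intro D _ g hg
    -- key: f a ≤ f a' → g a ≤ g a'
    have key : ∀ a a' : A, f a ≤ f a' → g a ≤ g a' := fun a a' h => hg ⟨(a, a'), h⟩
    choose s hs using hf
    refine ⟨⟨fun b => g (s b), ?_⟩, ?_⟩
    · intro b b' h
      exact key _ _ (by rw [hs, hs]; exact h)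
    · ext a
      exact le_antisymm (key _ _ (by rw [hs])) (key _ _ (by rw [hs]))
  · intro D _ g g' h b
    obtain ⟨a, rfl⟩ := hf b
    exact h a
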